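/- Let c(p,·) : ℕ → ℚ(q) be defined by c(p,n) = (-1)^{n+1} q^{n(n+3)/2} Σ_{k=0}^{n} (-1)^k q^{k(k+1)p + k(k-1)/2} (q^{2k+1} − 1) (q;q)_n / ((q;q)_{n+k+1} (q;q)_{n-k}). Then for every n ≥ 2 the following second-order recursion holds in ℚ(q): c(2, n) = −q^{2+2n}(1 − q^{n-1}) · c(2, n−2) − q^{1+n}(1 + q − q^n + q^{2n}) · c(2, n−1). -/
import Mathlib


noncomputable section

namespace StmtC

/-- The variable `q` of the field ℚ(q). -/
def q : RatFunc ℚ := RatFunc.X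

/-- The q-Pochhammer symbol `(q;q)_m = ∏_{i=1}^{m} (1 - qⁱ)`. -/
def qq (m : ℕ) : RatFunc ℚ := ∏ i ∈ Finset.range m, (1 - q ^ (i + 1))

/-- Masbaum's formula for the cyclotomic function of the p-th twist knot. -/
def c (p : ℤ) (n : ℕ) : RatFunc ℚ :=
  (-1) ^ (n + 1) * q ^ ((n : ℤ) * ((n : ℤ) + 3) / 2) *
    ∑ k ∈ Finset.range (n + 1),
      (-1) ^ k * q ^ ((k : ℤ) * ((k : ℤ) + 1) * p + (k : ℤ) * ((k : ℤ) - 1) / 2) *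
        (q ^ (2 * k + 1) - 1) * qq n / (qq (n + k + 1) * qq (n - k))

end StmtC

namespace StmtC

lemma hq0 : q ≠ 0 := RatFunc.X_ne_zero

lemma one_sub_q_pow_ne {i : ℕ} (hi : i ≠ 0) : 1 - q ^ i ≠ 0 := by
  have hp : (1 - Polynomial.X ^ i : Polynomial ℚ) ≠ 0 := by
    intro h
    have h2 := congrArg (Polynomial.eval 2) h
    simp at h2
    have : (1:ℚ) < 2 ^ i := one_lt_pow₀ (by norm_num) hi
    linarith
  have : (1 - q ^ i) = algebraMap (Polynomial ℚ) (RatFunc ℚ) (1 - Polynomial.X ^ i) := by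
    simp [q]
  rw [this]
  exact RatFunc.algebraMap_ne_zero hp

lemma qq_ne (m : ℕ) : qq m ≠ 0 := by
  apply Finset.prod_ne_zero_iff.2
  intro i _
  exact one_sub_q_pow_ne (Nat.succ_ne_zero i)

lemma qq_succ (m : ℕ) : qq (m + 1) = qq m * (1 - q ^ (m + 1)) :=
  Finset.prod_range_succ _ m

/-- summand of `c 2 n` -/
def t (n k : ℕ) : RatFunc ℚ :=
  (-1) ^ k * q ^ ((k : ℤ) * ((k : ℤ) + 1) * 2 + (k : ℤ) * ((k : ℤ) - 1) / 2) *
    (q ^ (2 * k + 1) - 1) * qq n / (qq (n + k + 1) * qq (n - k))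

def A (n : ℕ) : RatFunc ℚ := 1 + q - q ^ n + q ^ (2 * n)

def B (n : ℕ) : RatFunc ℚ := q ^ n - q

def g (n k : ℕ) : RatFunc ℚ :=
  (-1) ^ k * (q ^ (2 * n) / q ^ (2 * k)) *
    q ^ ((k : ℤ) * ((k : ℤ) + 1) * 2 + (k : ℤ) * ((k : ℤ) - 1) / 2) *
    (1 - q ^ k) * (1 - q ^ (n + 1 - k)) * qq (n - 1) / (qq (n + k) * qq (n + 1 - k))

lemma X_succ (k : ℕ) :
    ((k:ℤ)+1)*((k:ℤ)+1+1)*2 + ((k:ℤ)+1)*((k:ℤ)+1-1)/2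
      = ((5*k+4 : ℕ) : ℤ) + ((k:ℤ)*((k:ℤ)+1)*2 + (k:ℤ)*((k:ℤ)-1)/2) := by
  have h2 : ((k:ℤ)+1)*((k:ℤ)+1-1)/2 = ((k:ℤ)*((k:ℤ)-1))/2 + (k:ℤ) := by
    rw [show ((k:ℤ)+1)*((k:ℤ)+1-1) = (k:ℤ)*((k:ℤ)-1) + (k:ℤ)*2 from by ring,
      Int.add_mul_ediv_right _ _ (by norm_num : (2:ℤ) ≠ 0)]
  rw [h2]; push_cast; ring

set_option maxHeartbeats 1600000 in
lemma key_abs {F : Type*} [Field F] (Q X Y E s Z1 Z2 Z3 : F)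
    (n1 : Z1 ≠ 0) (n3 : Z3 ≠ 0)
    (p1 : 1 - Y*Q ≠ 0) (p2 : 1 - Y*Q*Q ≠ 0) (p3 : 1 - Y*Q*Q*Q ≠ 0)
    (p6 : 1 - X^2*Y*Q*Q ≠ 0) (p7 : 1 - X^2*Y*Q*Q*Q ≠ 0) :
    s * E * (X ^ 2 * Q - 1) * (Z2 * (1 - X * Y * Q) * (1 - X * Y * Q * Q)) /
          (Z3 * (1 - X ^ 2 * Y * Q * Q) * (1 - X ^ 2 * Y * Q * Q * Q) * (Z1 * (1 - Y * Q) * (1 - Y * Q * Q))) -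
        (1 + Q - X * Y * Q * Q + (X * Y * Q * Q) ^ 2) *
          (s * E * (X ^ 2 * Q - 1) * (Z2 * (1 - X * Y * Q)) / (Z3 * (1 - X ^ 2 * Y * Q * Q) * (Z1 * (1 - Y * Q)))) -
      (X * Y * Q * Q - Q) * (s * E * (X ^ 2 * Q - 1) * Z2 / (Z3 * Z1)) =
    s * -1 * (Y ^ 2 * Q ^ 2) * (X ^ 5 * Q ^ 4 * E) * (1 - X * Q) * (1 - Y * Q * Q) * (Z2 * (1 - X * Y * Q)) /
        (Z3 * (1 - X ^ 2 * Y * Q * Q) * (1 - X ^ 2 * Y * Q * Q * Q) * (Z1 * (1 - Y * Q) * (1 - Y * Q * Q))) -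
      s * (Y ^ 2 * Q ^ 4) * E * (1 - X) * (1 - Y * Q * Q * Q) * (Z2 * (1 - X * Y * Q)) /
        (Z3 * (1 - X ^ 2 * Y * Q * Q) * (Z1 * (1 - Y * Q) * (1 - Y * Q * Q) * (1 - Y * Q * Q * Q))) := by
  have hD : Z3 * (1 - X^2*Y*Q*Q) * (1 - X^2*Y*Q*Q*Q) * (Z1 * (1-Y*Q) * (1-Y*Q*Q) * (1-Y*Q*Q*Q)) ≠ 0 := by
    exact mul_ne_zero (mul_ne_zero (mul_ne_zero n3 p6) p7)
      (mul_ne_zero (mul_ne_zero (mul_ne_zero n1 p1) p2) p3)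
  rw [show s * E * (X ^ 2 * Q - 1) * (Z2 * (1 - X * Y * Q) * (1 - X * Y * Q * Q)) /
          (Z3 * (1 - X ^ 2 * Y * Q * Q) * (1 - X ^ 2 * Y * Q * Q * Q) * (Z1 * (1 - Y * Q) * (1 - Y * Q * Q)))
      = s * E * (X ^ 2 * Q - 1) * (Z2 * (1 - X * Y * Q) * (1 - X * Y * Q * Q)) * (1-Y*Q*Q*Q) /
          (Z3 * (1 - X^2*Y*Q*Q) * (1 - X^2*Y*Q*Q*Q) * (Z1 * (1-Y*Q) * (1-Y*Q*Q) * (1-Y*Q*Q*Q))) from by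
        rw [div_eq_div_iff (mul_ne_zero (mul_ne_zero (mul_ne_zero n3 p6) p7)
          (mul_ne_zero (mul_ne_zero n1 p1) p2)) hD]; ring]
  rw [show (1 + Q - X * Y * Q * Q + (X * Y * Q * Q) ^ 2) *
          (s * E * (X ^ 2 * Q - 1) * (Z2 * (1 - X * Y * Q)) / (Z3 * (1 - X ^ 2 * Y * Q * Q) * (Z1 * (1 - Y * Q))))
      = (1 + Q - X * Y * Q * Q + (X * Y * Q * Q) ^ 2) * (s * E * (X ^ 2 * Q - 1) * (Z2 * (1 - X * Y * Q)))
          * ((1 - X^2*Y*Q*Q*Q) * (1-Y*Q*Q) * (1-Y*Q*Q*Q)) /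
          (Z3 * (1 - X^2*Y*Q*Q) * (1 - X^2*Y*Q*Q*Q) * (Z1 * (1-Y*Q) * (1-Y*Q*Q) * (1-Y*Q*Q*Q))) from by
        rw [← mul_div_assoc, div_eq_div_iff (mul_ne_zero (mul_ne_zero n3 p6) (mul_ne_zero n1 p1)) hD]; ring]
  rw [show (X * Y * Q * Q - Q) * (s * E * (X ^ 2 * Q - 1) * Z2 / (Z3 * Z1))
      = (X * Y * Q * Q - Q) * (s * E * (X ^ 2 * Q - 1) * Z2) *
          ((1 - X^2*Y*Q*Q) * (1 - X^2*Y*Q*Q*Q) * (1-Y*Q) * (1-Y*Q*Q) * (1-Y*Q*Q*Q)) /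
          (Z3 * (1 - X^2*Y*Q*Q) * (1 - X^2*Y*Q*Q*Q) * (Z1 * (1-Y*Q) * (1-Y*Q*Q) * (1-Y*Q*Q*Q))) from by
        rw [← mul_div_assoc, div_eq_div_iff (mul_ne_zero n3 n1) hD]; ring]
  rw [show s * -1 * (Y ^ 2 * Q ^ 2) * (X ^ 5 * Q ^ 4 * E) * (1 - X * Q) * (1 - Y * Q * Q) * (Z2 * (1 - X * Y * Q)) /
        (Z3 * (1 - X ^ 2 * Y * Q * Q) * (1 - X ^ 2 * Y * Q * Q * Q) * (Z1 * (1 - Y * Q) * (1 - Y * Q * Q)))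
      = s * -1 * (Y ^ 2 * Q ^ 2) * (X ^ 5 * Q ^ 4 * E) * (1 - X * Q) * (1 - Y * Q * Q) * (Z2 * (1 - X * Y * Q)) * (1-Y*Q*Q*Q) /
          (Z3 * (1 - X^2*Y*Q*Q) * (1 - X^2*Y*Q*Q*Q) * (Z1 * (1-Y*Q) * (1-Y*Q*Q) * (1-Y*Q*Q*Q))) from by
        rw [div_eq_div_iff (mul_ne_zero (mul_ne_zero (mul_ne_zero n3 p6) p7)
          (mul_ne_zero (mul_ne_zero n1 p1) p2)) hD]; ring]
  rw [show s * (Y ^ 2 * Q ^ 4) * E * (1 - X) * (1 - Y * Q * Q * Q) * (Z2 * (1 - X * Y * Q)) /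
        (Z3 * (1 - X ^ 2 * Y * Q * Q) * (Z1 * (1 - Y * Q) * (1 - Y * Q * Q) * (1 - Y * Q * Q * Q)))
      = s * (Y ^ 2 * Q ^ 4) * E * (1 - X) * (1 - Y * Q * Q * Q) * (Z2 * (1 - X * Y * Q)) * (1 - X^2*Y*Q*Q*Q) /
          (Z3 * (1 - X^2*Y*Q*Q) * (1 - X^2*Y*Q*Q*Q) * (Z1 * (1-Y*Q) * (1-Y*Q*Q) * (1-Y*Q*Q*Q))) from by
        rw [div_eq_div_iff (mul_ne_zero (mul_ne_zero n3 p6)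
          (mul_ne_zero (mul_ne_zero (mul_ne_zero n1 p1) p2) p3)) hD]; ring]
  rw [div_sub_div_same, div_sub_div_same, div_sub_div_same, div_eq_div_iff hD hD]
  ring


set_option maxHeartbeats 1000000 in
lemma key (k m : ℕ) :
    t (k+m+2) k - A (k+m+2) * t (k+m+1) k - B (k+m+2) * t (k+m) k
      = g (k+m+2) (k+1) - g (k+m+2) k := by
  simp only [t, g, A, B]
  rw [show k+m+2-k = m+2 from by omega, show k+m+1-k = m+1 from by omega,
    show k+m-k = m from by omega, show k+m+2+1-(k+1) = m+2 from by omega,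
    show k+m+2+1-k = m+3 from by omega, show k+m+2-1 = k+m+1 from by omega,
    show k+m+2+k+1 = 2*k+m+1+1+1 from by omega,
    show k+m+1+k+1 = 2*k+m+1+1 from by omega,
    show k+m+k+1 = 2*k+m+1 from by omega,
    show k+m+2+(k+1) = 2*k+m+1+1+1 from by omega,
    show k+m+2+k = 2*k+m+1+1 from by omega]
  rw [show (m+3:ℕ) = m+1+1+1 from by omega, show (m+2:ℕ) = m+1+1 from by omega,
    show (k+m+2:ℕ) = k+m+1+1 from by omega]
  rw [qq_succ (2*k+m+1+1), qq_succ (2*k+m+1), qq_succ (m+1+1), qq_succ (m+1),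
    qq_succ m, qq_succ (k+m+1), qq_succ (k+m)]
  push_cast
  rw [X_succ k, zpow_add₀ hq0 (((5*k+4 : ℕ)):ℤ) _, zpow_natCast]
  rw [zpow_add₀ hq0 ((k:ℤ)*((k:ℤ)+1)*2) ((k:ℤ)*((k:ℤ)-1)/2)]
  generalize q ^ ((k:ℤ)*((k:ℤ)+1)*2) = E1
  generalize q ^ ((k:ℤ)*((k:ℤ)-1)/2) = E2
  have n1 := qq_ne m
  have n2 := qq_ne (k+m)
  have n3 := qq_ne (2*k+m+1)
  have p1 := one_sub_q_pow_ne (i := m+1) (by omega)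
  have p2 := one_sub_q_pow_ne (i := m+1+1) (by omega)
  have p3 := one_sub_q_pow_ne (i := m+1+1+1) (by omega)
  have p4 := one_sub_q_pow_ne (i := k+m+1) (by omega)
  have p5 := one_sub_q_pow_ne (i := k+m+1+1) (by omega)
  have p6 := one_sub_q_pow_ne (i := 2*k+m+1+1) (by omega)
  have p7 := one_sub_q_pow_ne (i := 2*k+m+1+1+1) (by omega)
  have hq := hq0
  have hd1 : q ^ (2*(k+m+1+1)) / q ^ (2*k) = q ^ (2*m+4) := by
    rw [show 2*(k+m+1+1) = 2*m+4 + 2*k from by ring, pow_add]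
    exact mul_div_cancel_right₀ _ (pow_ne_zero _ hq0)
  have hd2 : q ^ (2*(k+m+1+1)) / q ^ (2*(k+1)) = q ^ (2*m+2) := by
    rw [show 2*(k+m+1+1) = 2*m+2 + 2*(k+1) from by ring, pow_add]
    exact mul_div_cancel_right₀ _ (pow_ne_zero _ hq0)
  rw [hd1, hd2]
  simp only [pow_add, pow_mul', pow_one]
  generalize hX : q ^ k = X
  generalize hY : q ^ m = Y
  have P1 : 1 - Y*q ≠ 0 := by
    rw [← hY, show q^m*q = q^(m+1) from by ring]; exact one_sub_q_pow_ne (by omega)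
  have P2 : 1 - Y*q*q ≠ 0 := by
    rw [← hY, show q^m*q*q = q^(m+2) from by ring]; exact one_sub_q_pow_ne (by omega)
  have P3 : 1 - Y*q*q*q ≠ 0 := by
    rw [← hY, show q^m*q*q*q = q^(m+3) from by ring]; exact one_sub_q_pow_ne (by omega)
  have P6 : 1 - X^2*Y*q*q ≠ 0 := by
    rw [← hX, ← hY, show (q^k)^2*q^m*q*q = q^(2*k+m+2) from by ring]
    exact one_sub_q_pow_ne (by omega)
  have P7 : 1 - X^2*Y*q*q*q ≠ 0 := by
    rw [← hX, ← hY, show (q^k)^2*q^m*q*q*q = q^(2*k+m+3) from by ring]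
    exact one_sub_q_pow_ne (by omega)
  exact key_abs q X Y (E1*E2) ((-1)^k) (qq m) (qq (k+m)) (qq (2*k+m+1)) n1 n3 P1 P2 P3 P6 P7

lemma g_zero (n : ℕ) : g n 0 = 0 := by simp [g]

lemma g_top (n : ℕ) : g n (n + 1) = 0 := by
  simp [g, Nat.sub_self]

lemma qq_one : qq 1 = 1 - q := by
  rw [show (1:ℕ) = 0+1 from rfl, qq_succ]; simp [qq]

lemma qq_zero : qq 0 = 1 := by simp [qq]

lemma key3 (k : ℕ) : t (k+1) (k+1) = g (k+1) (k+1+1) - g (k+1) (k+1) := by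
  rw [show k+1+1 = (k+1)+1 from rfl, g_top]
  simp only [t, g]
  rw [show k+1+(k+1)+1 = 2*k+2+1 from by omega, show k+1-(k+1) = 0 from by omega,
    show k+1+(k+1) = 2*k+2 from by omega, show k+1+1-(k+1) = 1 from by omega,
    show k+1-1 = k from by omega]
  rw [qq_succ (2*k+2), qq_zero, qq_one, show (k+1:ℕ) = k+1 from rfl, qq_succ k]
  rw [div_self (pow_ne_zero (2*(k+1)) hq0)]
  have a1 := qq_ne (2*k+2)
  have a2 := one_sub_q_pow_ne (i := 2*k+2+1) (by omega)
  have a3 := one_sub_q_pow_ne (i := 1) (by omega)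
  have a4 : (1 : RatFunc ℚ) - q ≠ 0 := by simpa using a3
  field_simp
  ring

lemma qq_two : qq 2 = (1-q) * (1-q^2) := by
  rw [show (2:ℕ) = 1+1 from rfl, qq_succ, qq_one]

lemma key2 (k : ℕ) : t (k+1) k - A (k+1) * t k k = g (k+1) (k+1) - g (k+1) k := by
  simp only [t, g, A]
  rw [show k+1+k+1 = 2*k+1+1 from by omega, show k+1-k = 1 from by omega,
    show k+k+1 = 2*k+1 from by omega, show k-k = 0 from by omega,
    show k+1+(k+1) = 2*k+1+1 from by omega, show k+1+1-(k+1) = 1 from by omega,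
    show k+1-1 = k from by omega, show k+1+1-k = 2 from by omega,
    show k+1+k = 2*k+1 from by omega,
    qq_succ (2*k+1), qq_zero, qq_one, qq_two, qq_succ k]
  rw [div_self (pow_ne_zero (2*(k+1)) hq0)]
  have hd2 : q ^ (2*(k+1)) / q ^ (2*k) = q ^ 2 := by
    rw [show 2*(k+1) = 2 + 2*k from by ring, pow_add]
    exact mul_div_cancel_right₀ _ (pow_ne_zero _ hq0)
  rw [hd2]
  push_cast
  rw [X_succ k, zpow_add₀ hq0 (((5*k+4 : ℕ)):ℤ) _, zpow_natCast]
  rw [zpow_add₀ hq0 ((k:ℤ)*((k:ℤ)+1)*2) ((k:ℤ)*((k:ℤ)-1)/2)]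
  generalize q ^ ((k:ℤ)*((k:ℤ)+1)*2) = E1
  generalize q ^ ((k:ℤ)*((k:ℤ)-1)/2) = E2
  have a1 := qq_ne (2*k+1)
  have a2 := qq_ne k
  have a3 := one_sub_q_pow_ne (i := 2*k+1+1) (by omega)
  have a4 := one_sub_q_pow_ne (i := 1) (by omega)
  have a5 : (1 : RatFunc ℚ) - q ≠ 0 := by simpa using a4
  have a6 := one_sub_q_pow_ne (i := 2) (by omega)
  have hq := hq0
  field_simp
  ring
lemma c_eq (n : ℕ) : c 2 n
    = (-1)^(n+1) * q^((n:ℤ)*((n:ℤ)+3)/2) * ∑ k ∈ Finset.range (n+1), t n k := rfl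

lemma sum_rec (m : ℕ) :
    ∑ k ∈ Finset.range (m+3), t (m+2) k
      = A (m+2) * ∑ k ∈ Finset.range (m+2), t (m+1) k
        + B (m+2) * ∑ k ∈ Finset.range (m+1), t m k := by
  have hk : ∀ k ∈ Finset.range (m+1), t (m+2) k
      = A (m+2) * t (m+1) k + B (m+2) * t m k + (g (m+2) (k+1) - g (m+2) k) := by
    intro k hkm
    have hkm' : k ≤ m := Nat.lt_succ_iff.mp (Finset.mem_range.mp hkm)
    have h := key k (m-k)
    rw [show k+(m-k)+2 = m+2 from by omega, show k+(m-k)+1 = m+1 from by omega,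
      show k+(m-k) = m from by omega] at h
    linear_combination h
  have hs : ∑ k ∈ Finset.range (m+1), t (m+2) k
      = A (m+2) * (∑ k ∈ Finset.range (m+1), t (m+1) k)
        + B (m+2) * (∑ k ∈ Finset.range (m+1), t m k)
        + (g (m+2) (m+1) - g (m+2) 0) := by
    rw [Finset.sum_congr rfl hk, Finset.sum_add_distrib, Finset.sum_add_distrib,
      ← Finset.mul_sum, ← Finset.mul_sum, Finset.sum_range_sub (g (m+2))]
  have h2 := key2 (m+1)
  have h3 := key3 (m+1)
  have htop : g (m+2) (m+2+1) = 0 := g_top (m+2)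
  have hz : g (m+2) 0 = 0 := g_zero (m+2)
  rw [Finset.sum_range_succ (t (m+2)) (m+2), Finset.sum_range_succ (t (m+2)) (m+1),
    Finset.sum_range_succ (t (m+1)) (m+1), hs]
  rw [show m+1+1 = m+2 from rfl] at h2 h3
  rw [show m+2+1 = m+3 from rfl] at htop
  rw [show m+2+1 = m+3 from rfl] at h3
  linear_combination h2 + h3 + htop - hz

theorem cyclotomic_stevedore_recursion :
    ∀ n : ℕ, 2 ≤ n →
      c 2 n = -q ^ (2 + 2 * (n : ℤ)) * (1 - q ^ ((n : ℤ) - 1)) * c 2 (n - 2)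
            - q ^ (1 + (n : ℤ)) * (1 + q - q ^ (n : ℤ) + q ^ (2 * (n : ℤ))) * c 2 (n - 1) := by
  intro n hn
  obtain ⟨m, rfl⟩ : ∃ m, n = m+2 := ⟨n-2, by omega⟩
  rw [show m+2-2 = m from by omega, show m+2-1 = m+1 from by omega]
  rw [c_eq, c_eq, c_eq, show m+2+1 = m+3 from rfl, show m+1+1 = m+2 from rfl, sum_rec m]
  simp only [A, B]
  have E2 : ((m+2:ℕ):ℤ) * (((m+2:ℕ):ℤ)+3)/2 = ((m:ℕ):ℤ)*(((m:ℕ):ℤ)+3)/2 + ((2*m+5:ℕ):ℤ) := by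
    push_cast
    rw [show ((m:ℤ)+2)*(((m:ℤ)+2)+3) = (m:ℤ)*((m:ℤ)+3) + (2*(m:ℤ)+5)*2 from by ring,
      Int.add_mul_ediv_right _ _ (two_ne_zero)]
  have E1 : ((m+1:ℕ):ℤ) * (((m+1:ℕ):ℤ)+3)/2 = ((m:ℕ):ℤ)*(((m:ℕ):ℤ)+3)/2 + ((m+2:ℕ):ℤ) := by
    push_cast
    rw [show ((m:ℤ)+1)*(((m:ℤ)+1)+3) = (m:ℤ)*((m:ℤ)+3) + ((m:ℤ)+2)*2 from by ring,
      Int.add_mul_ediv_right _ _ (two_ne_zero)]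
  rw [E2, E1]
  rw [show (2 + 2*((m+2:ℕ):ℤ)) = ((2*m+6:ℕ):ℤ) from by push_cast; ring,
     show ((m+2:ℕ):ℤ) - 1 = ((m+1:ℕ):ℤ) from by push_cast; ring,
     show (1 + ((m+2:ℕ):ℤ)) = ((m+3:ℕ):ℤ) from by push_cast; ring,
     show (2 * ((m+2:ℕ):ℤ)) = ((2*m+4:ℕ):ℤ) from by push_cast; ring,
     zpow_add₀ hq0, zpow_add₀ hq0]
  simp only [zpow_natCast]
  generalize q ^ (((m:ℕ):ℤ)*(((m:ℕ):ℤ)+3)/2) = P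
  ring
end StmtC
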